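/- (Lemma 3.1) Fix τ > 0, ε ≥ 0 and points xᵏ, xᵏ⁺¹ ∈ ℝⁿ, ȳᵏ, yᵏ⁺¹, ȳᵏ⁺¹ ∈ ℝᵐ such that: (i) (1/τ)S(ȳᵏ − yᵏ⁺¹) + A xᵏ ∈ ∂_{ε/2} g(yᵏ⁺¹); and (iii) for all y ∈ ℝᵐ, g(y) − ⟨Axᵏ⁺¹, y⟩ + (1/(2τ))‖y − ȳᵏ‖²_S ≥ g(ȳᵏ⁺¹) − ⟨Axᵏ⁺¹, ȳᵏ⁺¹⟩ + (1/(2τ))‖ȳᵏ⁺¹ − ȳᵏ‖²_S − ε/2. Then for every y ∈ ℝᵐ: L(xᵏ⁺¹, y) − L(xᵏ⁺¹, yᵏ⁺¹) ≤ (1/(2τ))(‖y − ȳᵏ‖²_S − ‖y − ȳᵏ⁺¹‖²_S) + √(ε/τ)·‖y − ȳᵏ⁺¹‖_S + (τ/2)‖A(xᵏ⁺¹ − xᵏ)‖²_{S⁻¹} + 2ε − (1/(2τ))‖ȳᵏ − yᵏ⁺¹‖²_S. -/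

import Mathlib

open Matrix Finset

/-- squared M-norm: ⟨x, M x⟩ -/
noncomputable def sqnorm {d : ℕ} (M : Matrix (Fin d) (Fin d) ℝ) (x : Fin d → ℝ) : ℝ :=
  x ⬝ᵥ M.mulVec x

/-- M-norm: √⟨x, M x⟩ -/
noncomputable def mnorm {d : ℕ} (M : Matrix (Fin d) (Fin d) ℝ) (x : Fin d → ℝ) : ℝ :=
  Real.sqrt (x ⬝ᵥ M.mulVec x)

/-- The Lagrangian L(x,y) = f(x) + ⟨Ax, y⟩ − g(y). -/
noncomputable def Lag {n m : ℕ} (f : (Fin n → ℝ) → ℝ) (g : (Fin m → ℝ) → ℝ)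
    (A : Matrix (Fin m) (Fin n) ℝ) (x : Fin n → ℝ) (y : Fin m → ℝ) : ℝ :=
  f x + A.mulVec x ⬝ᵥ y - g y

/-!
Condition (iii) says that `ȳᵏ⁺¹` minimizes, up to `ε/2`, the function
`φ + (1/2τ)‖· - ȳᵏ‖²_S` with `φ = g - ⟪Axᵏ⁺¹, ·⟫` convex. Comparing `ȳᵏ⁺¹` with the convex
combinations `θ y + (1 - θ) ȳᵏ⁺¹` and optimizing over `θ` gives the quadratic growth bound
`(1/2τ)‖y - ȳᵏ⁺¹‖²_S - √(ε/τ)‖y - ȳᵏ⁺¹‖_S - ε/2` for the gap at `y`. Condition (i) at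
`ȳᵏ⁺¹`, with the polarization identity for `⟪S(ȳᵏ - yᵏ⁺¹), ȳᵏ⁺¹ - yᵏ⁺¹⟫`, bounds `g(ȳᵏ⁺¹)` from
below, and Young's inequality for the `S⁻¹`/`S` pairing absorbs the remaining cross term
`⟪A(xᵏ⁺¹ - xᵏ), ȳᵏ⁺¹ - yᵏ⁺¹⟫`. Adding up gives the claim.
-/

open Filter Topology in
theorem le_of_forall_mul_one_sub_mul_sq_sub_sq_le {s t D : ℝ} (hs : 0 ≤ s) (ht : 0 ≤ t)
    (h : ∀ θ : ℝ, 0 < θ → θ ≤ 1 → θ * (1 - θ) * s ^ 2 - t ^ 2 ≤ θ * D) :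
    s ^ 2 - 2 * s * t - t ^ 2 ≤ D := by
  have h_one : -t ^ 2 ≤ D := by simpa using h 1 one_pos le_rfl
  rcases le_or_gt s t with hst | hts
  · nlinarith [mul_le_mul_of_nonneg_left hst hs]
  rcases ht.eq_or_lt with rfl | ht_pos
  · have hlim : Tendsto (fun θ : ℝ => (1 - θ) * s ^ 2) (𝓝[>] 0) (𝓝 (s ^ 2)) := by
      have : Continuous fun θ : ℝ => (1 - θ) * s ^ 2 := by fun_prop
      simpa using (this.tendsto 0).mono_left nhdsWithin_le_nhds
    have hle : ∀ᶠ θ in 𝓝[>] (0 : ℝ), (1 - θ) * s ^ 2 ≤ D := by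
      filter_upwards [Ioo_mem_nhdsGT one_pos] with θ ⟨hθ₀, hθ₁⟩
      exact le_of_mul_le_mul_left (by linarith [h θ hθ₀ hθ₁.le]) hθ₀
    simpa using le_of_tendsto hlim hle
  · -- θ = t / s balances the two error terms
    have hs_pos : 0 < s := ht_pos.trans hts
    have h' := h (t / s) (by positivity) ((div_le_one hs_pos).2 hts.le)
    have key : t / s * (s ^ 2 - 2 * s * t - t ^ 2) ≤ t / s * D := by
      have e1 : t / s * (1 - t / s) * s ^ 2 = t * s - t ^ 2 := by field_simp
      have e2 : t / s * (s ^ 2 - 2 * s * t - t ^ 2) = t * s - 2 * t ^ 2 - t ^ 3 / s := by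
        field_simp
      have : 0 ≤ t ^ 3 / s := by positivity
      linarith
    exact le_of_mul_le_mul_left key (by positivity)

section
variable {d : ℕ} (S : Matrix (Fin d) (Fin d) ℝ)

theorem sqnorm_smul_add_smul (θ : ℝ) (u v : Fin d → ℝ) :
    sqnorm S (θ • u + (1 - θ) • v)
      = θ * sqnorm S u + (1 - θ) * sqnorm S v - θ * (1 - θ) * sqnorm S (u - v) := by
  simp only [sqnorm, mulVec_add, mulVec_smul, mulVec_sub, dotProduct_add, dotProduct_smul,
    dotProduct_sub, add_dotProduct, sub_dotProduct, smul_dotProduct, smul_eq_mul]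
  ring

theorem sqnorm_neg (x : Fin d → ℝ) : sqnorm S (-x) = sqnorm S x := by
  simp [sqnorm, mulVec_neg]

theorem sqnorm_sub_comm (x y : Fin d → ℝ) : sqnorm S (x - y) = sqnorm S (y - x) := by
  rw [← neg_sub, sqnorm_neg]

variable {S}

theorem sqnorm_nonneg (hS : S.PosSemidef) (x : Fin d → ℝ) : 0 ≤ sqnorm S x := by
  simpa [sqnorm] using hS.dotProduct_mulVec_nonneg x

theorem mnorm_sq (hS : S.PosSemidef) (x : Fin d → ℝ) : mnorm S x ^ 2 = sqnorm S x :=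
  Real.sq_sqrt (sqnorm_nonneg hS x)

theorem Matrix.IsSymm.dotProduct_mulVec_comm (hS : S.IsSymm) (u v : Fin d → ℝ) :
    u ⬝ᵥ S *ᵥ v = v ⬝ᵥ S *ᵥ u := by
  rw [dotProduct_mulVec, ← mulVec_transpose, hS.eq, dotProduct_comm]

theorem sqnorm_sub (hS : S.IsSymm) (u v : Fin d → ℝ) :
    sqnorm S (u - v) = sqnorm S u + sqnorm S v - 2 * (S *ᵥ u ⬝ᵥ v) := by
  have := hS.dotProduct_mulVec_comm u v
  simp only [sqnorm, mulVec_sub, dotProduct_sub, sub_dotProduct] at *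
  rw [dotProduct_comm (S *ᵥ u)]
  linarith

theorem dotProduct_le_sqnorm_inv_add_sqnorm (hS : S.PosDef) {τ : ℝ} (hτ : 0 < τ)
    (p v : Fin d → ℝ) : p ⬝ᵥ v ≤ τ / 2 * sqnorm S⁻¹ p + 1 / (2 * τ) * sqnorm S v := by
  have hSym : S.IsSymm := isHermitian_iff_isSymm.1 hS.isHermitian
  set u := S⁻¹ *ᵥ p
  have hSu : S *ᵥ u = p := by
    rw [mulVec_mulVec, mul_nonsing_inv S hS.det_pos.ne'.isUnit, one_mulVec]
  have h_smul : sqnorm S (τ • u) = τ ^ 2 * sqnorm S⁻¹ p := by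
    simp only [sqnorm, mulVec_smul, hSu, smul_dotProduct, dotProduct_smul, smul_eq_mul]
    rw [dotProduct_comm]; ring
  have h_cross : S *ᵥ (τ • u) ⬝ᵥ v = τ * (p ⬝ᵥ v) := by
    rw [mulVec_smul, hSu, smul_dotProduct, smul_eq_mul]
  have h0 := sqnorm_nonneg hS.posSemidef (τ • u - v)
  rw [sqnorm_sub hSym, h_smul, h_cross] at h0
  have key : τ / 2 * sqnorm S⁻¹ p + 1 / (2 * τ) * sqnorm S v - p ⬝ᵥ v
      = (τ ^ 2 * sqnorm S⁻¹ p + sqnorm S v - 2 * (τ * p ⬝ᵥ v)) / (2 * τ) := by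
    field_simp
  linarith [div_nonneg h0 (by positivity : (0 : ℝ) ≤ 2 * τ)]

theorem ConvexOn.mul_sub_le_of_le_add_sqnorm {φ : (Fin d → ℝ) → ℝ} (hφ : ConvexOn ℝ Set.univ φ)
    {κ δ : ℝ} {y₀ z : Fin d → ℝ}
    (hz : ∀ y, φ z + κ * sqnorm S (z - y₀) - δ ≤ φ y + κ * sqnorm S (y - y₀))
    (y : Fin d → ℝ) {θ : ℝ} (hθ₀ : 0 ≤ θ) (hθ₁ : θ ≤ 1) :
    θ * (1 - θ) * (κ * sqnorm S (y - z)) - δ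
      ≤ θ * (φ y + κ * sqnorm S (y - y₀) - (φ z + κ * sqnorm S (z - y₀))) := by
  have hφw : φ (θ • y + (1 - θ) • z) ≤ θ * φ y + (1 - θ) * φ z :=
    hφ.2 (Set.mem_univ y) (Set.mem_univ z) hθ₀ (by linarith) (by ring)
  have hw : θ • y + (1 - θ) • z - y₀ = θ • (y - y₀) + (1 - θ) • (z - y₀) := by
    module
  have hq := sqnorm_smul_add_smul S θ (y - y₀) (z - y₀)
  rw [← hw, sub_sub_sub_cancel_right] at hq
  have := hz (θ • y + (1 - θ) • z)
  rw [hq] at this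
  linarith

theorem ConvexOn.sub_le_of_le_add_sqnorm {φ : (Fin d → ℝ) → ℝ} (hφ : ConvexOn ℝ Set.univ φ)
    (hS : S.PosSemidef) {κ δ : ℝ} (hκ : 0 ≤ κ) (hδ : 0 ≤ δ) {y₀ z : Fin d → ℝ}
    (hz : ∀ y, φ z + κ * sqnorm S (z - y₀) - δ ≤ φ y + κ * sqnorm S (y - y₀))
    (y : Fin d → ℝ) :
    κ * sqnorm S (y - z) - 2 * √(κ * δ) * mnorm S (y - z) - δ
      ≤ φ y + κ * sqnorm S (y - y₀) - (φ z + κ * sqnorm S (z - y₀)) := by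
  have hs : (√κ * mnorm S (y - z)) ^ 2 = κ * sqnorm S (y - z) := by
    rw [mul_pow, Real.sq_sqrt hκ, mnorm_sq hS]
  have hst : √κ * mnorm S (y - z) * √δ = √(κ * δ) * mnorm S (y - z) := by
    rw [Real.sqrt_mul hκ]; ring
  have := le_of_forall_mul_one_sub_mul_sq_sub_sq_le (s := √κ * mnorm S (y - z)) (t := √δ)
    (mul_nonneg (Real.sqrt_nonneg κ) (Real.sqrt_nonneg _)) (Real.sqrt_nonneg δ) fun θ hθ₀ hθ₁ => by
      rw [hs, Real.sq_sqrt hδ]; exact hφ.mul_sub_le_of_le_add_sqnorm hz y hθ₀.le hθ₁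
  rwa [hs, mul_assoc 2, hst, Real.sq_sqrt hδ, ← mul_assoc] at this
end

theorem dual_update_ineq_general {n m : ℕ}
    (f : (Fin n → ℝ) → ℝ) (g : (Fin m → ℝ) → ℝ)
    (hg : ConvexOn ℝ Set.univ g)
    (A : Matrix (Fin m) (Fin n) ℝ)
    (S : Matrix (Fin m) (Fin m) ℝ) (hS : S.PosDef)
    (τ : ℝ) (hτ : 0 < τ) (ε : ℝ) (hε : 0 ≤ ε)
    (xk xk1 : Fin n → ℝ) (ybark yk1 ybark1 : Fin m → ℝ)
    (hi : ∀ y, g y ≥ g yk1 +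
        ((1 / τ) • S.mulVec (ybark - yk1) + A.mulVec xk) ⬝ᵥ (y - yk1) - ε / 2)
    (hiii : ∀ y, g y - A.mulVec xk1 ⬝ᵥ y + (1 / (2 * τ)) * sqnorm S (y - ybark)
        ≥ g ybark1 - A.mulVec xk1 ⬝ᵥ ybark1
          + (1 / (2 * τ)) * sqnorm S (ybark1 - ybark) - ε / 2) :
    ∀ y, Lag f g A xk1 y - Lag f g A xk1 yk1
      ≤ (1 / (2 * τ)) * (sqnorm S (y - ybark) - sqnorm S (y - ybark1))
        + Real.sqrt (ε / τ) * mnorm S (y - ybark1)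
        + (τ / 2) * sqnorm S⁻¹ (A.mulVec (xk1 - xk))
        + 2 * ε - (1 / (2 * τ)) * sqnorm S (ybark - yk1) := by
  intro y
  have hSym : S.IsSymm := isHermitian_iff_isSymm.1 hS.isHermitian
  have hφ : ConvexOn ℝ Set.univ fun y => g y - A *ᵥ xk1 ⬝ᵥ y :=
    hg.sub ((dotProductBilin ℝ ℝ (A *ᵥ xk1)).concaveOn convex_univ)
  have h_gap := hφ.sub_le_of_le_add_sqnorm hS.posSemidef (by positivity) (by positivity) hiii y
  have h_sqrt : 2 * √(1 / (2 * τ) * (ε / 2)) = √(ε / τ) := by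
    rw [show 1 / (2 * τ) * (ε / 2) = ε / τ / 2 ^ 2 by ring, Real.sqrt_div' _ (by positivity),
      Real.sqrt_sq zero_le_two]
    ring
  rw [h_sqrt] at h_gap
  have h_three : 1 / τ * (S *ᵥ (ybark - yk1) ⬝ᵥ (ybark1 - yk1)) = 1 / (2 * τ) *
      (sqnorm S (ybark - yk1) + sqnorm S (ybark1 - yk1) - sqnorm S (ybark1 - ybark)) := by
    rw [sqnorm_sub_comm S ybark1 ybark, ← sub_sub_sub_cancel_right ybark ybark1 yk1,
      sqnorm_sub hSym (ybark - yk1) (ybark1 - yk1)]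
    ring
  have h_prox := hi ybark1
  rw [add_dotProduct, smul_dotProduct, smul_eq_mul, h_three] at h_prox
  have h_young := dotProduct_le_sqnorm_inv_add_sqnorm hS hτ (A *ᵥ (xk1 - xk)) (ybark1 - yk1)
  have h_lin : A *ᵥ (xk1 - xk) ⬝ᵥ (ybark1 - yk1) = A *ᵥ xk1 ⬝ᵥ ybark1 - A *ᵥ xk1 ⬝ᵥ yk1
      - A *ᵥ xk ⬝ᵥ (ybark1 - yk1) := by
    rw [mulVec_sub, sub_dotProduct, dotProduct_sub]
  simp only [Lag]
  linarith

/-- Lemma 3.1. -/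
theorem dual_update_ineq {n m : ℕ}
    (f : (Fin n → ℝ) → ℝ) (g : (Fin m → ℝ) → ℝ)
    (hf : ConvexOn ℝ Set.univ f) (hg : ConvexOn ℝ Set.univ g)
    (A : Matrix (Fin m) (Fin n) ℝ)
    (S : Matrix (Fin m) (Fin m) ℝ) (hS : S.PosDef)
    (τ : ℝ) (hτ : 0 < τ) (ε : ℝ) (hε : 0 ≤ ε)
    (xk xk1 : Fin n → ℝ) (ybark yk1 ybark1 : Fin m → ℝ)
    (hi : ∀ y, g y ≥ g yk1 +
        ((1 / τ) • S.mulVec (ybark - yk1) + A.mulVec xk) ⬝ᵥ (y - yk1) - ε / 2)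
    (hiii : ∀ y, g y - A.mulVec xk1 ⬝ᵥ y + (1 / (2 * τ)) * sqnorm S (y - ybark)
        ≥ g ybark1 - A.mulVec xk1 ⬝ᵥ ybark1
          + (1 / (2 * τ)) * sqnorm S (ybark1 - ybark) - ε / 2) :
    ∀ y, Lag f g A xk1 y - Lag f g A xk1 yk1
      ≤ (1 / (2 * τ)) * (sqnorm S (y - ybark) - sqnorm S (y - ybark1))
        + Real.sqrt (ε / τ) * mnorm S (y - ybark1)
        + (τ / 2) * sqnorm S⁻¹ (A.mulVec (xk1 - xk))
        + 2 * ε - (1 / (2 * τ)) * sqnorm S (ybark - yk1) :=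
  dual_update_ineq_general f g hg A S hS τ hτ ε hε xk xk1 ybark yk1 ybark1 hi hiii
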